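/- For every n ≥ 1 and every λ ∈ ℂ, the isotropy group of the single symmetric canonical block K_n(λ) under complex orthogonal similarity is {I_n, −I_n}; that is, a matrix Q ∈ O_n(ℂ) satisfies Qᵀ K_n(λ) Q = K_n(λ) if and only if Q = I_n or Q = −I_n. -/

import Mathlib

open Matrix

noncomputable section

/-- Form (0T0): block matrix partitioned by Jordan structure `(α, m)` whose `(r,s)` block,
viewed as an `α r × α s` array of `m r × m s` blocks, is a rectangular block
upper-triangular Toeplitz matrix aligned to the top-right corner. -/
def IsForm0T0 {N : ℕ} (α m : Fin N → ℕ)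
    (X : Matrix (Σ r : Fin N, Fin (α r) × Fin (m r)) (Σ r : Fin N, Fin (α r) × Fin (m r)) ℂ) :
    Prop :=
  ∃ A : ∀ r s : Fin N, ℕ → Matrix (Fin (m r)) (Fin (m s)) ℂ,
    ∀ (r s : Fin N) (i : Fin (α r)) (j : Fin (α s)) (a : Fin (m r)) (b : Fin (m s)),
      X ⟨r, (i, a)⟩ ⟨s, (j, b)⟩ =
        if (i : ℕ) + (α s - min (α r) (α s)) ≤ (j : ℕ) then
          A r s ((j : ℕ) - (i : ℕ) - (α s - min (α r) (α s))) a b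
        else 0

/-- `E_b(I_m)`: the `bm × bm` block matrix with `I_m` on the block anti-diagonal. -/
def revE (b m : ℕ) : Matrix (Fin b × Fin m) (Fin b × Fin m) ℂ :=
  Matrix.of fun p q => if (p.1 : ℕ) + (q.1 : ℕ) + 1 = b ∧ p.2 = q.2 then 1 else 0

/-- `F = ⊕_r E_{α r}(I_{m r})`. -/
def bigF {N : ℕ} (α m : Fin N → ℕ) :
    Matrix (Σ r : Fin N, Fin (α r) × Fin (m r)) (Σ r : Fin N, Fin (α r) × Fin (m r)) ℂ :=
  Matrix.blockDiagonal' fun r => revE (α r) (m r)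

/-- The `n × n` upper-triangular Jordan block `J_n(λ)`. -/
def Jmat (n : ℕ) (lam : ℂ) : Matrix (Fin n) (Fin n) ℂ :=
  Matrix.of fun i j => if (j : ℕ) = (i : ℕ) then lam else if (j : ℕ) = (i : ℕ) + 1 then 1 else 0

/-- The `n × n` backward identity matrix `E_n`. -/
def ErevC (n : ℕ) : Matrix (Fin n) (Fin n) ℂ :=
  Matrix.of fun i j => if (i : ℕ) + (j : ℕ) + 1 = n then 1 else 0

/-- `P_n = (1/√2)(I + i E_n)`. -/
noncomputable def Pmat (n : ℕ) : Matrix (Fin n) (Fin n) ℂ :=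
  (Real.sqrt 2 : ℂ)⁻¹ • (1 + Complex.I • ErevC n)

/-- `P_n⁻¹ = (1/√2)(I − i E_n)`. -/
noncomputable def PmatInv (n : ℕ) : Matrix (Fin n) (Fin n) ℂ :=
  (Real.sqrt 2 : ℂ)⁻¹ • (1 - Complex.I • ErevC n)

/-- The symmetric canonical form `K_n(λ) = P_n J_n(λ) P_n⁻¹` of a Jordan block. -/
noncomputable def Kmat (n : ℕ) (lam : ℂ) : Matrix (Fin n) (Fin n) ℂ :=
  Pmat n * Jmat n lam * PmatInv n

/-- `T(A_0, …)`: the `β × β` block upper-triangular Toeplitz matrix with blocks `A_j`. -/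
def blkToeplitz (β p q : ℕ) (A : ℕ → Matrix (Fin p) (Fin q) ℂ) :
    Matrix (Fin β × Fin p) (Fin β × Fin q) ℂ :=
  Matrix.of fun x y =>
    if (x.1 : ℕ) ≤ (y.1 : ℕ) then A ((y.1 : ℕ) - (x.1 : ℕ)) x.2 y.2 else 0

/-- The `(i,i)`-th `m r × m r` entry-block of the `(r,r)` diagonal block of `X`; for a
matrix of form (0T0) this is the leading Toeplitz coefficient `A^{rr}_0`. -/
def diagLead {N : ℕ} (α m : Fin N → ℕ)
    (X : Matrix (Σ r : Fin N, Fin (α r) × Fin (m r)) (Σ r : Fin N, Fin (α r) × Fin (m r)) ℂ)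
    (r : Fin N) (i : Fin (α r)) : Matrix (Fin (m r)) (Fin (m r)) ℂ :=
  Matrix.of fun a b => X ⟨r, (i, a)⟩ ⟨r, (i, b)⟩

/-- The space of skew-symmetric matrices commuting with `S`. -/
def skewCommSubmodule (ι : Type*) [Fintype ι] [DecidableEq ι] (S : Matrix ι ι ℂ) :
    Submodule ℂ (Matrix ι ι ℂ) where
  carrier := {X | Xᵀ = -X ∧ X * S = S * X}
  add_mem' := by
    rintro a b ⟨ha1, ha2⟩ ⟨hb1, hb2⟩
    refine ⟨?_, ?_⟩
    · rw [Matrix.transpose_add, ha1, hb1, neg_add]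
    · rw [add_mul, mul_add, ha2, hb2]
  zero_mem' := by
    refine ⟨?_, ?_⟩
    · simp
    · simp
  smul_mem' := by
    rintro c a ⟨h1, h2⟩
    refine ⟨?_, ?_⟩
    · rw [Matrix.transpose_smul, h1, smul_neg]
    · rw [Matrix.smul_mul, Matrix.mul_smul, h2]

/-- The isotropy group (as a set) of `S` under orthogonal similarity. -/
def sigmaSet {ι : Type*} [Fintype ι] [DecidableEq ι] (S : Matrix ι ι ℂ) : Set (Matrix ι ι ℂ) :=
  {Q | Qᵀ * Q = 1 ∧ Qᵀ * S * Q = S}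

section Aux
variable {n : ℕ}

lemma fin_sum_pick (f : Fin n → ℂ) (b : Fin n) :
    ∑ k, (if k = b then f k else 0) = f b := by
  simp [Finset.sum_ite_eq' Finset.univ b f]

lemma Emul_apply (M : Matrix (Fin n) (Fin n) ℂ) (i j : Fin n) :
    (ErevC n * M) i j = M i.rev j := by
  rw [Matrix.mul_apply, ← fin_sum_pick (fun k => M k j) i.rev]
  refine Finset.sum_congr rfl fun k _ => ?_
  have hk := k.isLt; have hi := i.isLt
  simp only [ErevC, Matrix.of_apply]
  by_cases h : k = i.rev
  · rw [if_pos h, if_pos (by subst h; rw [Fin.val_rev]; omega), one_mul]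
  · rw [if_neg h, if_neg (by rw [Fin.ext_iff, Fin.val_rev] at h; omega), zero_mul]

lemma mulE_apply (M : Matrix (Fin n) (Fin n) ℂ) (i j : Fin n) :
    (M * ErevC n) i j = M i j.rev := by
  rw [Matrix.mul_apply, ← fin_sum_pick (fun k => M i k) j.rev]
  refine Finset.sum_congr rfl fun k _ => ?_
  have hk := k.isLt; have hj := j.isLt
  simp only [ErevC, Matrix.of_apply]
  by_cases h : k = j.rev
  · rw [if_pos h, if_pos (by subst h; rw [Fin.val_rev]; omega), mul_one]
  · rw [if_neg h, if_neg (by rw [Fin.ext_iff, Fin.val_rev] at h; omega), mul_zero]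

lemma E_transpose : (ErevC n)ᵀ = ErevC n := by
  ext i j
  simp only [Matrix.transpose_apply, ErevC, Matrix.of_apply]
  exact if_congr (by omega) rfl rfl

lemma E_mul_E : ErevC n * ErevC n = 1 := by
  ext i j
  rw [Emul_apply]
  have hi := i.isLt; have hj := j.isLt
  simp only [ErevC, Matrix.of_apply, Matrix.one_apply, Fin.val_rev]
  exact if_congr (by rw [Fin.ext_iff]; omega) rfl rfl

lemma sqrt2_inv_sq : ((Real.sqrt 2 : ℂ))⁻¹ * (Real.sqrt 2 : ℂ)⁻¹ = 2⁻¹ := by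
  rw [← mul_inv, ← Complex.ofReal_mul, Real.mul_self_sqrt (by norm_num)]
  norm_num

lemma P_mul_Pinv : Pmat n * PmatInv n = 1 := by
  have h : ErevC n * ErevC n = (1 : Matrix (Fin n) (Fin n) ℂ) := E_mul_E
  simp only [Pmat, PmatInv, Matrix.smul_mul, Matrix.mul_smul, Matrix.mul_add, Matrix.add_mul,
    Matrix.mul_sub, Matrix.sub_mul, Matrix.one_mul, Matrix.mul_one, h, smul_smul,
    Complex.I_mul_I, sqrt2_inv_sq]
  match_scalars
  · linear_combination (1 - Complex.I * Complex.I) * sqrt2_inv_sq - (2:ℂ)⁻¹ * Complex.I_mul_I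
  · ring

lemma Pinv_mul_P : PmatInv n * Pmat n = 1 := by
  have h : ErevC n * ErevC n = (1 : Matrix (Fin n) (Fin n) ℂ) := E_mul_E
  simp only [Pmat, PmatInv, Matrix.smul_mul, Matrix.mul_smul, Matrix.mul_add, Matrix.add_mul,
    Matrix.mul_sub, Matrix.sub_mul, Matrix.one_mul, Matrix.mul_one, h, smul_smul,
    Complex.I_mul_I, sqrt2_inv_sq]
  match_scalars
  · linear_combination (1 - Complex.I * Complex.I) * sqrt2_inv_sq - (2:ℂ)⁻¹ * Complex.I_mul_I
  · ring

lemma P_sq : Pmat n * Pmat n = Complex.I • ErevC n := by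
  have h : ErevC n * ErevC n = (1 : Matrix (Fin n) (Fin n) ℂ) := E_mul_E
  simp only [Pmat, Matrix.smul_mul, Matrix.mul_smul, Matrix.mul_add, Matrix.add_mul,
    Matrix.one_mul, Matrix.mul_one, h, smul_smul, Complex.I_mul_I, sqrt2_inv_sq]
  match_scalars
  · linear_combination (1 + Complex.I * Complex.I) * sqrt2_inv_sq + (2:ℂ)⁻¹ * Complex.I_mul_I
  · linear_combination 2 * Complex.I * sqrt2_inv_sq

lemma P_transpose : (Pmat n)ᵀ = Pmat n := by
  rw [Pmat, Matrix.transpose_smul, Matrix.transpose_add, Matrix.transpose_one,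
    Matrix.transpose_smul, E_transpose]

lemma Pinv_transpose : (PmatInv n)ᵀ = PmatInv n := by
  rw [PmatInv, Matrix.transpose_smul, Matrix.transpose_sub, Matrix.transpose_one,
    Matrix.transpose_smul, E_transpose]

lemma fin_sum_shift (f : Fin n → ℂ) (b : ℕ) :
    ∑ k : Fin n, (if b = (k:ℕ)+1 then f k else 0) =
      if h : 1 ≤ b ∧ b - 1 < n then f ⟨b-1, h.2⟩ else 0 := by
  split_ifs with hb
  · rw [← fin_sum_pick f ⟨b-1, hb.2⟩]
    refine Finset.sum_congr rfl fun k _ => ?_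
    have hk := k.isLt
    by_cases h : k = (⟨b-1, hb.2⟩ : Fin n)
    · rw [if_pos h, if_pos (by rw [Fin.ext_iff] at h; simp at h; omega)]
    · rw [if_neg h, if_neg (by rw [Fin.ext_iff] at h; simp at h; omega)]
  · refine Finset.sum_eq_zero fun k _ => ?_
    have hk := k.isLt
    rw [if_neg (by omega)]

lemma fin_sum_shift' (f : Fin n → ℂ) (a : ℕ) :
    ∑ k : Fin n, (if (k:ℕ) = a+1 then f k else 0) =
      if h : a+1 < n then f ⟨a+1, h⟩ else 0 := by
  split_ifs with ha
  · rw [← fin_sum_pick f ⟨a+1, ha⟩]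
    refine Finset.sum_congr rfl fun k _ => ?_
    have hk := k.isLt
    by_cases h : k = (⟨a+1, ha⟩ : Fin n)
    · rw [if_pos h, if_pos (by rw [Fin.ext_iff] at h; simp at h; omega)]
    · rw [if_neg h, if_neg (by rw [Fin.ext_iff] at h; simp at h; omega)]
  · refine Finset.sum_eq_zero fun k _ => ?_
    have hk := k.isLt
    rw [if_neg (by omega)]

lemma sum_mulJ {lam : ℂ} (T : Matrix (Fin n) (Fin n) ℂ) (a b : Fin n) :
    (T * Jmat n lam) a b = lam * T a b +
      (if h : 1 ≤ (b:ℕ) ∧ (b:ℕ) - 1 < n then T a ⟨(b:ℕ)-1, h.2⟩ else 0) := by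
  rw [Matrix.mul_apply]
  have step : ∀ k : Fin n, T a k * Jmat n lam k b =
      (if k = b then lam * T a k else 0) + (if (b:ℕ) = (k:ℕ)+1 then T a k else 0) := by
    intro k
    simp only [Jmat, Matrix.of_apply]
    by_cases h1 : (b:ℕ) = (k:ℕ)
    · rw [if_pos h1, if_pos (Fin.ext h1.symm), if_neg (by omega)]
      ring
    · rw [if_neg h1, if_neg (show ¬ k = b from fun hc => h1 (by rw [hc]))]
      by_cases h2 : (b:ℕ) = (k:ℕ)+1
      · rw [if_pos h2, if_pos h2]; ring
      · rw [if_neg h2, if_neg h2]; ring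
  rw [Finset.sum_congr rfl fun k _ => step k, Finset.sum_add_distrib]
  congr 1
  · rw [← fin_sum_pick (fun k => lam * T a k) b]
  · exact fin_sum_shift (fun k => T a k) (b:ℕ)

lemma sum_Jmul {lam : ℂ} (T : Matrix (Fin n) (Fin n) ℂ) (a b : Fin n) :
    (Jmat n lam * T) a b = lam * T a b +
      (if h : (a:ℕ)+1 < n then T ⟨(a:ℕ)+1, h⟩ b else 0) := by
  rw [Matrix.mul_apply]
  have step : ∀ k : Fin n, Jmat n lam a k * T k b =
      (if k = a then lam * T k b else 0) + (if (k:ℕ) = (a:ℕ)+1 then T k b else 0) := by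
    intro k
    simp only [Jmat, Matrix.of_apply]
    by_cases h1 : (k:ℕ) = (a:ℕ)
    · rw [if_pos h1, if_pos (Fin.ext h1), if_neg (by omega)]
      ring
    · rw [if_neg h1, if_neg (show ¬ k = a from fun hc => h1 (by rw [hc]))]
      by_cases h2 : (k:ℕ) = (a:ℕ)+1
      · rw [if_pos h2, if_pos h2]; ring
      · rw [if_neg h2, if_neg h2]; ring
  rw [Finset.sum_congr rfl fun k _ => step k, Finset.sum_add_distrib]
  congr 1
  · have := fin_sum_pick (fun k => lam * T k b) a
    rw [this]
  · exact fin_sum_shift' (fun k => T k b) (a:ℕ)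

lemma toeplitz_aux {lam : ℂ} {T : Matrix (Fin n) (Fin n) ℂ}
    (hTJ : T * Jmat n lam = Jmat n lam * T) :
    ∀ (i j : ℕ) (hi : i < n) (hj : j < n),
      T ⟨i, hi⟩ ⟨j, hj⟩ =
        if h : i ≤ j then T ⟨0, by omega⟩ ⟨j - i, by omega⟩ else 0 := by
  have R1 : ∀ (i j : ℕ) (hi : i + 1 < n) (hj : j + 1 < n),
      T ⟨i+1, hi⟩ ⟨j+1, hj⟩ = T ⟨i, by omega⟩ ⟨j, by omega⟩ := by
    intro i j hi hj
    have h := congrFun (congrFun hTJ ⟨i, by omega⟩) ⟨j+1, hj⟩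
    rw [sum_mulJ, sum_Jmul] at h
    rw [dif_pos (show 1 ≤ ((⟨j+1, hj⟩ : Fin n):ℕ) ∧ ((⟨j+1, hj⟩ : Fin n):ℕ) - 1 < n by
      show 1 ≤ j+1 ∧ j+1-1 < n; omega)] at h
    rw [dif_pos (by simpa using hi : ((⟨i, by omega⟩ : Fin n):ℕ)+1 < n)] at h
    have h' := add_left_cancel h
    simpa using h'.symm
  have R2 : ∀ (i : ℕ) (hi : i + 1 < n),
      T ⟨i+1, hi⟩ ⟨0, by omega⟩ = 0 := by
    intro i hi
    have h := congrFun (congrFun hTJ ⟨i, by omega⟩) ⟨0, by omega⟩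
    rw [sum_mulJ, sum_Jmul] at h
    rw [dif_neg (by simp)] at h
    rw [dif_pos (by simpa using hi : ((⟨i, by omega⟩ : Fin n):ℕ)+1 < n)] at h
    have h' := add_left_cancel h
    simpa using h'.symm
  intro i
  induction i with
  | zero =>
    intro j hi hj
    rw [dif_pos (Nat.zero_le _)]
    rfl
  | succ i ih =>
    intro j hi hj
    match j with
    | 0 =>
      rw [dif_neg (by omega)]
      exact R2 i hi
    | Nat.succ j =>
      rw [R1 i j hi hj, ih j (by omega) (by omega)]
      by_cases h : i ≤ j
      · rw [dif_pos h, dif_pos (show i+1 ≤ j+1 by omega)]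
        exact congrArg _ (Fin.ext (Nat.succ_sub_succ j i).symm)
      · rw [dif_neg h, dif_neg (show ¬ i+1 ≤ j+1 by omega)]

lemma toeplitz {lam : ℂ} {T : Matrix (Fin n) (Fin n) ℂ}
    (hTJ : T * Jmat n lam = Jmat n lam * T) (i j : Fin n) :
    T i j = if h : (i:ℕ) ≤ (j:ℕ) then
        T ⟨0, i.pos⟩ ⟨(j:ℕ) - (i:ℕ), by omega⟩ else 0 := by
  have h := toeplitz_aux hTJ (i:ℕ) (j:ℕ) i.isLt j.isLt
  simpa using h

end Aux



/-- For every `n ≥ 1` and `λ ∈ ℂ`, the isotropy group of the single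
symmetric canonical block `K_n(λ)` under complex orthogonal similarity is `{I, −I}`:
an orthogonal `Q` satisfies `Qᵀ K_n(λ) Q = K_n(λ)` iff `Q = 1` or `Q = −1`. -/
theorem stmt19 (n : ℕ) (hn : 1 ≤ n) (lam : ℂ) :
    ∀ Q : Matrix (Fin n) (Fin n) ℂ, Qᵀ * Q = 1 →
      (Qᵀ * Kmat n lam * Q = Kmat n lam ↔ (Q = 1 ∨ Q = -1)) := by
  intro Q hQ
  constructor
  · intro h
    have hQQt : Q * Qᵀ = 1 := mul_eq_one_comm.mp hQ
    -- K commutes with Q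
    have hKQ : Kmat n lam * Q = Q * Kmat n lam := by
      calc Kmat n lam * Q = (Q * Qᵀ) * Kmat n lam * Q := by rw [hQQt, Matrix.one_mul]
        _ = Q * (Qᵀ * Kmat n lam * Q) := by
            simp only [Matrix.mul_assoc]
        _ = Q * Kmat n lam := by rw [h]
    set T : Matrix (Fin n) (Fin n) ℂ := PmatInv n * Q * Pmat n with hTdef
    have hQT : Q = Pmat n * T * PmatInv n := by
      rw [hTdef]
      calc Q = (Pmat n * PmatInv n) * Q * (Pmat n * PmatInv n) := by
            rw [P_mul_Pinv, Matrix.one_mul, Matrix.mul_one]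
        _ = Pmat n * (PmatInv n * Q * Pmat n) * PmatInv n := by
            simp only [Matrix.mul_assoc]
    have hJK : PmatInv n * Kmat n lam * Pmat n = Jmat n lam := by
      rw [Kmat]
      calc PmatInv n * (Pmat n * Jmat n lam * PmatInv n) * Pmat n
          = (PmatInv n * Pmat n) * Jmat n lam * (PmatInv n * Pmat n) := by
            simp only [Matrix.mul_assoc]
        _ = Jmat n lam := by rw [Pinv_mul_P, Matrix.one_mul, Matrix.mul_one]
    have hTJ : T * Jmat n lam = Jmat n lam * T := by
      rw [← hJK, hTdef]
      calc PmatInv n * Q * Pmat n * (PmatInv n * Kmat n lam * Pmat n)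
          = PmatInv n * (Q * (Pmat n * PmatInv n) * Kmat n lam) * Pmat n := by
            simp only [Matrix.mul_assoc]
        _ = PmatInv n * (Q * Kmat n lam) * Pmat n := by
            rw [P_mul_Pinv, Matrix.mul_one]
        _ = PmatInv n * (Kmat n lam * Q) * Pmat n := by rw [hKQ]
        _ = PmatInv n * Kmat n lam * (Pmat n * PmatInv n) * Q * Pmat n := by
            rw [P_mul_Pinv, Matrix.mul_one]; simp only [Matrix.mul_assoc]
        _ = PmatInv n * Kmat n lam * Pmat n * (PmatInv n * Q * Pmat n) := by
            simp only [Matrix.mul_assoc]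
    -- orthogonality transfers to Tᵀ (I•E) T = I•E
    have hTE : Tᵀ * (ErevC n) * T = ErevC n := by
      have hQt : Qᵀ = PmatInv n * Tᵀ * Pmat n := by
        rw [hQT]
        rw [Matrix.transpose_mul, Matrix.transpose_mul, Pinv_transpose, P_transpose]
        simp only [Matrix.mul_assoc]
      have h1 : PmatInv n * (Tᵀ * (Pmat n * Pmat n) * T) * PmatInv n = 1 := by
        rw [← hQ]
        nth_rewrite 1 [hQt]
        nth_rewrite 1 [hQT]
        simp only [Matrix.mul_assoc]
      have h2 : Tᵀ * (Pmat n * Pmat n) * T = Pmat n * Pmat n := by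
        calc Tᵀ * (Pmat n * Pmat n) * T
            = Pmat n * (PmatInv n * (Tᵀ * (Pmat n * Pmat n) * T) * PmatInv n) * Pmat n := by
              rw [show ∀ X : Matrix (Fin n) (Fin n) ℂ,
                  Pmat n * (PmatInv n * X * PmatInv n) * Pmat n =
                  (Pmat n * PmatInv n) * X * (PmatInv n * Pmat n) from fun X => by
                simp only [Matrix.mul_assoc], P_mul_Pinv, Pinv_mul_P,
                Matrix.one_mul, Matrix.mul_one]
          _ = Pmat n * 1 * Pmat n := by rw [h1]
          _ = Pmat n * Pmat n := by rw [Matrix.mul_one]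
      have h3 : Complex.I • (Tᵀ * ErevC n * T) = Complex.I • ErevC n := by
        rw [← P_sq]
        rw [← h2, P_sq]
        rw [Matrix.mul_smul, Matrix.smul_mul]
      exact smul_right_injective _ Complex.I_ne_zero h3
    -- Tᵀ = E T E  (Toeplitz symmetry)
    have hTt : Tᵀ = ErevC n * T * ErevC n := by
      ext i j
      rw [Matrix.transpose_apply, mulE_apply, Emul_apply]
      have hi := i.isLt; have hj := j.isLt
      rw [toeplitz hTJ j i, toeplitz hTJ i.rev j.rev]
      have hri := Fin.val_rev i; have hrj := Fin.val_rev j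
      by_cases hle : (j:ℕ) ≤ (i:ℕ)
      · rw [dif_pos hle, dif_pos (show ((i.rev:ℕ)) ≤ (j.rev:ℕ) by omega)]
        exact congrArg _ (Fin.ext (by simp; omega))
      · rw [dif_neg hle, dif_neg (show ¬ ((i.rev:ℕ)) ≤ (j.rev:ℕ) by omega)]
    -- T * T = 1
    have hTT : T * T = 1 := by
      have h4 : ErevC n * (T * T) = ErevC n := by
        have := hTE
        rw [hTt] at this
        calc ErevC n * (T * T)
            = ErevC n * T * (ErevC n * ErevC n) * T := by
              rw [E_mul_E, Matrix.mul_one]; simp only [Matrix.mul_assoc]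
          _ = ErevC n * T * ErevC n * ErevC n * T := by simp only [Matrix.mul_assoc]
          _ = ErevC n := this
      calc T * T = (ErevC n * ErevC n) * (T * T) := by rw [E_mul_E, Matrix.one_mul]
        _ = ErevC n * (ErevC n * (T * T)) := by rw [Matrix.mul_assoc]
        _ = ErevC n * ErevC n := by rw [h4]
        _ = 1 := E_mul_E
    -- Toeplitz coefficients
    have h0 : 0 < n := hn
    set z : Fin n := ⟨0, h0⟩ with hz
    have hz0 : (z : ℕ) = 0 := rfl
    set c0 : ℂ := T z z with hc0def
    have key : ∀ b : Fin n, ∑ k, T z k * T k b = (1 : Matrix (Fin n) (Fin n) ℂ) z b := by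
      intro b
      rw [← Matrix.mul_apply, hTT]
    have hc0 : c0 * c0 = 1 := by
      have h5 := key z
      rw [Matrix.one_apply_eq] at h5
      rw [← h5]
      rw [Finset.sum_congr rfl (fun k _ => show T z k * T k z =
          (if k = z then c0 * c0 else 0) from ?_), fin_sum_pick (fun _ => c0 * c0) z]
      by_cases hk : k = z
      · rw [if_pos hk, hk]
      · rw [if_neg hk, toeplitz hTJ k z,
          dif_neg (show ¬ (k:ℕ) ≤ (z:ℕ) by
            intro hcon
            exact hk (Fin.ext (show (k:ℕ) = (z:ℕ) by omega)))]
        rw [mul_zero]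
    have hc0ne : c0 ≠ 0 := left_ne_zero_of_mul_eq_one hc0
    have hcd : ∀ d : ℕ, d < n → 1 ≤ d → ∀ (hd : d < n), T z ⟨d, hd⟩ = 0 := by
      intro d
      induction d using Nat.strong_induction_on with
      | _ d ih =>
        intro hdn hd1 hd
        set b : Fin n := ⟨d, hd⟩ with hb
        have hbv : (b : ℕ) = d := rfl
        set x : ℂ := T z b with hx
        have hzb : z ≠ b := by
          rw [Fin.ne_iff_vne, hz0, hbv]; omega
        have step : ∀ k : Fin n, T z k * T k b =
            (if k = z then c0 * x else 0) + (if k = b then x * c0 else 0) := by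
          intro k
          by_cases h1 : k = z
          · rw [if_pos h1, if_neg (h1 ▸ hzb), h1, add_zero]
          · rw [if_neg h1]
            by_cases h2 : k = b
            · rw [if_pos h2, h2, zero_add]
              have hbb : T b b = c0 := by
                rw [toeplitz hTJ b b, dif_pos (le_refl _)]
                exact congrArg _ (Fin.ext (by simp [hz0]))
              rw [hbb]
            · rw [if_neg h2, add_zero]
              have hk := k.isLt
              have hkz : 1 ≤ (k:ℕ) := by
                rcases Nat.eq_zero_or_pos (k:ℕ) with h | h
                · exact absurd (Fin.ext (by simp [hz, h])) h1
                · exact h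
              rcases Nat.lt_or_ge (k:ℕ) d with hlt | hge
              · have : T z k = 0 := by
                  have := ih (k:ℕ) hlt (by omega) hkz k.isLt
                  calc T z k = T z ⟨(k:ℕ), k.isLt⟩ := rfl
                    _ = 0 := this
                rw [this, zero_mul]
              · have hgt : d < (k:ℕ) := by
                  rcases Nat.lt_or_ge d (k:ℕ) with h | h
                  · exact h
                  · exact absurd (Fin.ext (by omega : (k:ℕ) = (b:ℕ))) h2
                have : T k b = 0 := by
                  rw [toeplitz hTJ k b, dif_neg (show ¬ (k:ℕ) ≤ (b:ℕ) by omega)]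
                rw [this, mul_zero]
        have hsum := key b
        rw [Finset.sum_congr rfl (fun k _ => step k), Finset.sum_add_distrib,
          fin_sum_pick (fun _ => c0 * x) z, fin_sum_pick (fun _ => x * c0) b,
          Matrix.one_apply_ne hzb] at hsum
        have h2x : (2:ℂ) * (c0 * x) = 0 := by linear_combination hsum
        rcases mul_eq_zero.mp h2x with h | h
        · exact absurd h (by norm_num)
        · rcases mul_eq_zero.mp h with h' | h'
          · exact absurd h' hc0ne
          · exact h'
    -- T = c0 • 1
    have hT1 : T = c0 • (1 : Matrix (Fin n) (Fin n) ℂ) := by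
      ext i j
      rw [toeplitz hTJ i j, Matrix.smul_apply]
      have hi := i.isLt; have hj := j.isLt
      by_cases hle : (i:ℕ) ≤ (j:ℕ)
      · rw [dif_pos hle]
        rcases Nat.lt_or_ge (i:ℕ) (j:ℕ) with hlt | hge
        · rw [hcd ((j:ℕ) - (i:ℕ)) (by omega) (by omega) (by omega),
            Matrix.one_apply_ne (by rw [Fin.ne_iff_vne]; omega), smul_zero]
        · have hij : i = j := Fin.ext (by omega)
          have h1e : (1 : Matrix (Fin n) (Fin n) ℂ) i j = 1 := by
            rw [hij]; exact Matrix.one_apply_eq j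
          rw [h1e, smul_eq_mul, mul_one]
          exact congrArg _ (Fin.ext (show (j:ℕ) - (i:ℕ) = (z:ℕ) by omega))
      · rw [dif_neg hle, Matrix.one_apply_ne (by rw [Fin.ne_iff_vne]; omega), smul_zero]
    have hQc : Q = c0 • (1 : Matrix (Fin n) (Fin n) ℂ) := by
      rw [hQT, hT1, Matrix.mul_smul, Matrix.smul_mul, Matrix.mul_one, P_mul_Pinv]
    rcases mul_self_eq_one_iff.mp hc0 with h | h
    · left; rw [hQc, h, one_smul]
    · right; rw [hQc, h, neg_smul, one_smul]
  · rintro (rfl | rfl)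
    · simp
    · simp [Matrix.transpose_neg, Matrix.neg_mul, Matrix.mul_neg]
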